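/- For every real number t with t ≠ 0, the 5 × 5 real matrix M(t) = [[0, 0, (t²+1)², t²+1, 1], [(t²+1)², −2(t²+1), 0, 2t²(t²+1), t²], [0, 0, −t(t²+1)², 4t(t²+1), −t], [1, 0, 1, 1, 0], [0, 1, 0, 1, 1]] is invertible; indeed det M(t) = −15 t (t²+1)⁴ ≠ 0. -/

import Mathlib

/-- The `5 × 5` matrix of the final linear system in the proof of ellipticity at fiber
infinity (dimension 3) for the mixed ray transform `L_{2,2}`, with `t = |η|/ξ`. -/
noncomputable def mixedFiberSystem (t : ℝ) : Matrix (Fin 5) (Fin 5) ℝ :=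
  !![0,              0,                (t ^ 2 + 1) ^ 2,        t ^ 2 + 1,               1;
     (t ^ 2 + 1) ^ 2, -2 * (t ^ 2 + 1), 0,                     2 * t ^ 2 * (t ^ 2 + 1), t ^ 2;
     0,              0,                -t * (t ^ 2 + 1) ^ 2,   4 * t * (t ^ 2 + 1),     -t;
     1,              0,                1,                      1,                       0;
     0,              1,                0,                      1,                       1]

theorem det_mixedFiberSystem (t : ℝ) :
    (mixedFiberSystem t).det = -15 * t * (t ^ 2 + 1) ^ 4 := by
  simp [mixedFiberSystem, Matrix.det_succ_row_zero, Fin.sum_univ_succ, Fin.succAbove]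
  ring

/-- **Nonsingularity of the final linear system at fiber infinity.**  For every `t ≠ 0`,
`det M(t) = −15 t (t² + 1)⁴ ≠ 0`, so `M(t)` is invertible. -/
theorem mixedFiberSystem_invertible (t : ℝ) (ht : t ≠ 0) :
    (mixedFiberSystem t).det = -15 * t * (t ^ 2 + 1) ^ 4 ∧ IsUnit (mixedFiberSystem t) := by
  have hdet := det_mixedFiberSystem t
  refine ⟨hdet, ?_⟩
  have hq : t ^ 2 + 1 ≠ 0 := by positivity
  rw [Matrix.isUnit_iff_isUnit_det, hdet, isUnit_iff_ne_zero]
  exact mul_ne_zero (mul_ne_zero (by norm_num) ht) (pow_ne_zero 4 hq)
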